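/- For every run DAG G and k ∈ ℕ, the function r^k is a ranking bounded by m = 2|Q\F|: every F-node receives an even rank, r^k is non-increasing along all edges of G, and all ranks are at most m. -/

import Mathlib

/-! Profiles of maximal runs grow by exactly one letter along the edges of `G'`, and beyond
level `k` a `⊤`-labelled node is a non-`F` node that inherits its label from its `G'`-parent.
Hence, for every edge `u → v` of `G`, the `⊤`-classes above `h v` are one-letter extensions of
`⊤`-classes above `h u`, so `α` does not increase along edges, and it decreases strictly when the
label changes from `⊥` at `u` to `⊤` at `v`. Distinct `⊤`-classes on one level need distinct
non-`F` states, which bounds the ranks by `2 |Q \ F|`. -/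

/-- Strict lexicographic order on finite 0-1 profiles. -/
def ProfLt (a b : List Bool) : Prop := List.Lex (· < ·) a b

/-- Non-strict lexicographic order on finite 0-1 profiles. -/
def ProfLe (a b : List Bool) : Prop := a = b ∨ ProfLt a b

/-- A nondeterministic Büchi automaton on infinite words. -/
structure NBW (Q : Type) (σ : Type) where
  init : Set Q
  trans : Q → σ → Set Q
  acc : Q → Bool

namespace NBW

variable {Q σ : Type} (A : NBW Q σ) (w : ℕ → σ)

/-- `(q,i)` is a vertex of the run DAG of `A` on `w`. -/
def InDag (v : Q × ℕ) : Prop :=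
  ∃ p : ℕ → Q, p 0 ∈ A.init ∧ (∀ j, j < v.2 → p (j + 1) ∈ A.trans (p j) (w j)) ∧ p v.2 = v.1

/-- Edge of the run DAG. -/
def Edge (u v : Q × ℕ) : Prop :=
  A.InDag w u ∧ v.2 = u.2 + 1 ∧ v.1 ∈ A.trans u.1 (w u.2)

/-- An infinite initial path through the (sub-)DAG with edge relation `E`. -/
def IsPath (E : Q × ℕ → Q × ℕ → Prop) (π : ℕ → Q × ℕ) : Prop :=
  (π 0).1 ∈ A.init ∧ (π 0).2 = 0 ∧ ∀ i, E (π i) (π (i + 1))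

/-- An accepting path: initial and visiting F-nodes infinitely often. -/
def AcceptingPath (E : Q × ℕ → Q × ℕ → Prop) (π : ℕ → Q × ℕ) : Prop :=
  A.IsPath E π ∧ ∀ N, ∃ i, N ≤ i ∧ A.acc (π i).1 = true

/-- Profile (sequence of acceptance labels) of the first `i+1` states of `p`. -/
def profileOf (p : ℕ → Q) (i : ℕ) : List Bool :=
  (List.range (i + 1)).map fun j => A.acc (p j)

/-- `p` encodes a finite initial run ending at node `v`. -/
def FinRunTo (p : ℕ → Q) (v : Q × ℕ) : Prop :=
  p 0 ∈ A.init ∧ (∀ j, j < v.2 → p (j + 1) ∈ A.trans (p j) (w j)) ∧ p v.2 = v.1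

/-- `h` assigns to each node the lexicographically maximal profile
over all finite initial runs to it. -/
def IsProfileFun (h : Q × ℕ → List Bool) : Prop :=
  ∀ v, A.InDag w v →
    (∃ p, A.FinRunTo w p v ∧ A.profileOf p v.2 = h v) ∧
    ∀ p, A.FinRunTo w p v → ProfLe (A.profileOf p v.2) (h v)

/-- Edges of the pruned DAG `G'`: only edges from predecessors of
lexicographically maximal profile are kept. -/
def Edge' (h : Q × ℕ → List Bool) (u v : Q × ℕ) : Prop :=
  A.Edge w u v ∧ ∀ u', A.Edge w u' v → ¬ ProfLt (h u) (h u')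

/-- `v` is finite in `G'`: it has finitely many descendants in `G'`. -/
def FiniteIn' (h : Q × ℕ → List Bool) (v : Q × ℕ) : Prop :=
  Set.Finite {u | Relation.ReflTransGen (A.Edge' w h) v u}

/-- Vertices of `G''`: vertices of the run DAG that are not finite in `G'`. -/
def InDag'' (h : Q × ℕ → List Bool) (v : Q × ℕ) : Prop :=
  A.InDag w v ∧ ¬ A.FiniteIn' w h v

/-- Edges of `G''`. -/
def Edge'' (h : Q × ℕ → List Bool) (u v : Q × ℕ) : Prop :=
  A.Edge' w h u v ∧ A.InDag'' w h u ∧ A.InDag'' w h v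

/-- `lam` is the retrospective labeling `λ^k`: ⊤ at levels ≤ k, ⊥ on F-nodes
after level k, inherited along `G'`-edges otherwise. -/
def IsRetroLabeling (h : Q × ℕ → List Bool) (k : ℕ) (lam : Q × ℕ → Bool) : Prop :=
  (∀ u, A.InDag w u → u.2 ≤ k → lam u = true) ∧
  (∀ u, A.InDag w u → k < u.2 → A.acc u.1 = true → lam u = false) ∧
  (∀ u v, k < v.2 → A.acc v.1 = false → A.Edge' w h u v → lam v = lam u)

/-- A labeling is legal when every ⊥-labeled node is finite in `G'`. -/
def Legal (h : Q × ℕ → List Bool) (lam : Q × ℕ → Bool) : Prop :=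
  ∀ u, A.InDag w u → lam u = false → A.FiniteIn' w h u

/-- `α(u)`: the number of ⊤-labeled profile-equivalence classes on `u`'s level
whose profile is strictly greater than `h u`. -/
noncomputable def alphaCount (h : Q × ℕ → List Bool) (lam : Q × ℕ → Bool) (u : Q × ℕ) : ℕ :=
  Set.ncard {p : List Bool | ∃ v, A.InDag w v ∧ v.2 = u.2 ∧ lam v = true ∧ h v = p ∧ ProfLt (h u) p}

/-- The `k`-retrospective ranking (with top rank `m`). -/
noncomputable def retroRank (h : Q × ℕ → List Bool) (lam : Q × ℕ → Bool) (k m : ℕ)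
    (u : Q × ℕ) : ℕ :=
  if u.2 ≤ k then m
  else if lam u then 2 * A.alphaCount w h lam u + 1 else 2 * A.alphaCount w h lam u

/-- `m = 2 |Q \ F|`. -/
def mBound [Fintype Q] : ℕ :=
  2 * Finset.card (Finset.univ.filter fun q => A.acc q = false)

end NBW

namespace List

variable {α : Type*} [LinearOrder α]

theorem append_singleton_lt_append_singleton_iff {a b : List α} (hab : a.length = b.length)
    {c d : α} : a ++ [c] < b ++ [d] ↔ a < b ∨ a = b ∧ c < d := by
  induction a generalizing b with
  | nil =>
    obtain rfl : b = [] := eq_nil_of_length_eq_zero hab.symm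
    simp [cons_lt_cons_iff]
  | cons x a ih =>
    obtain ⟨y, b, rfl⟩ := exists_cons_of_length_eq_add_one hab.symm
    simp only [cons_append, cons_lt_cons_iff, ih (Nat.succ.inj hab), cons.injEq]
    tauto

theorem append_singleton_le_append_singleton_iff {a b : List α} (hab : a.length = b.length)
    (c : α) : a ++ [c] ≤ b ++ [c] ↔ a ≤ b := by
  simp only [← not_lt, append_singleton_lt_append_singleton_iff hab.symm, lt_irrefl, and_false,
    or_false]

end List

namespace NBW

variable {Q σ : Type} {A : NBW Q σ} {w : ℕ → σ}

theorem profileOf_length (p : ℕ → Q) (i : ℕ) : (A.profileOf p i).length = i + 1 := by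
  simp [profileOf]

theorem profileOf_succ (p : ℕ → Q) (i : ℕ) :
    A.profileOf p (i + 1) = A.profileOf p i ++ [A.acc (p (i + 1))] := by
  simp [profileOf, List.range_succ]

theorem profileOf_congr {p p' : ℕ → Q} {i : ℕ} (hp : ∀ j ≤ i, p j = p' j) :
    A.profileOf p i = A.profileOf p' i :=
  List.map_congr_left fun j hj => by rw [hp j (Nat.lt_succ_iff.mp (List.mem_range.mp hj))]

theorem FinRunTo.snoc {u v : Q × ℕ} {p : ℕ → Q} (hp : A.FinRunTo w p u) (e : A.Edge w u v) :
    A.FinRunTo w (Function.update p v.2 v.1) v ∧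
      A.profileOf (Function.update p v.2 v.1) v.2 = A.profileOf p u.2 ++ [A.acc v.1] := by
  obtain ⟨h0, hstep, hend⟩ := hp
  obtain ⟨-, hlev, htr⟩ := e
  have hagree : ∀ j ≤ u.2, Function.update p v.2 v.1 j = p j := fun j hj =>
    Function.update_of_ne (by omega) _ _
  refine ⟨⟨?_, fun j hj => ?_, by simp⟩, ?_⟩
  · rwa [hagree 0 (Nat.zero_le _)]
  · rcases Nat.lt_succ_iff_lt_or_eq.mp (hlev ▸ hj) with hj | rfl
    · rw [hagree j hj.le, hagree (j + 1) hj]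
      exact hstep j hj
    · rw [← hlev, Function.update_self, hagree _ le_rfl, hend]
      exact htr
  · rw [hlev, profileOf_succ, ← hlev, Function.update_self, profileOf_congr hagree]

theorem Edge.inDag_right {u v : Q × ℕ} (e : A.Edge w u v) : A.InDag w v := by
  obtain ⟨p, hp⟩ : ∃ p, A.FinRunTo w p u := e.1
  exact ⟨_, (hp.snoc e).1⟩

theorem FinRunTo.edge_of_succ {p : ℕ → Q} {v : Q × ℕ} (hp : A.FinRunTo w p v) {i : ℕ}
    (hi : v.2 = i + 1) : A.FinRunTo w p (p i, i) ∧ A.Edge w (p i, i) v := by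
  obtain ⟨h0, hstep, hend⟩ := hp
  have hr : A.FinRunTo w p (p i, i) := ⟨h0, fun j hj => hstep j (by omega), rfl⟩
  refine ⟨hr, ⟨p, hr⟩, hi, ?_⟩
  simpa only [← hi, hend] using hstep i (by omega)

theorem finite_setOf_edge [Finite Q] (v : Q × ℕ) : {u : Q × ℕ | A.Edge w u v}.Finite :=
  (Set.finite_range fun q : Q => (q, v.2 - 1)).subset fun u hu =>
    ⟨u.1, Prod.ext rfl (by have := hu.2.1; simp only; omega)⟩

theorem exists_edge' [Finite Q] {h : Q × ℕ → List Bool} {v : Q × ℕ} (hv : A.InDag w v)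
    (hv2 : v.2 ≠ 0) : ∃ u, A.Edge' w h u v := by
  obtain ⟨p, hp⟩ : ∃ p, A.FinRunTo w p v := hv
  obtain ⟨-, e⟩ := hp.edge_of_succ (i := v.2 - 1) (by omega)
  obtain ⟨u, hu, hmax⟩ := Set.exists_max_image _ h (finite_setOf_edge v) ⟨_, e⟩
  exact ⟨u, hu, fun u' e' => not_lt.mpr (hmax u' e')⟩

section ProfileFun

variable {h : Q × ℕ → List Bool} (hprof : A.IsProfileFun w h)
include hprof

theorem IsProfileFun.length_eq {v : Q × ℕ} (hv : A.InDag w v) : (h v).length = v.2 + 1 := by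
  obtain ⟨⟨p, -, hpe⟩, -⟩ := hprof v hv
  rw [← hpe, profileOf_length]

theorem IsProfileFun.append_le_of_edge {u v : Q × ℕ} (e : A.Edge w u v) :
    h u ++ [A.acc v.1] ≤ h v := by
  obtain ⟨⟨p, hp, hpe⟩, -⟩ := hprof u e.1
  obtain ⟨hp', hprofile⟩ := hp.snoc e
  have := (hprof v e.inDag_right).2 _ hp'
  rwa [hprofile, hpe] at this

/-- The source of a `G'`-edge has a profile at least that of the predecessor of the target on a
maximal run to the target. -/
theorem IsProfileFun.eq_append_of_edge' {u v : Q × ℕ} (e' : A.Edge' w h u v) :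
    h v = h u ++ [A.acc v.1] := by
  obtain ⟨e, hmax⟩ := e'
  obtain ⟨⟨p, hp, hpe⟩, -⟩ := hprof v e.inDag_right
  obtain ⟨hr, epred⟩ := hp.edge_of_succ e.2.1
  have hpu : A.profileOf p u.2 ≤ h (p u.2, u.2) := (hprof _ ⟨p, hr⟩).2 p hr
  have hpred_le : h (p u.2, u.2) ≤ h u := not_lt.mp (hmax _ epred)
  have hlen₁ : (A.profileOf p u.2).length = (h (p u.2, u.2)).length := by
    rw [profileOf_length, hprof.length_eq ⟨p, hr⟩]
  have hlen₂ : (h (p u.2, u.2)).length = (h u).length := by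
    rw [hprof.length_eq ⟨p, hr⟩, hprof.length_eq e.1]
  refine le_antisymm ?_ (hprof.append_le_of_edge e)
  rw [← hpe, e.2.1, profileOf_succ, ← e.2.1, hp.2.2]
  exact ((List.append_singleton_le_append_singleton_iff hlen₁ _).mpr hpu).trans
    ((List.append_singleton_le_append_singleton_iff hlen₂ _).mpr hpred_le)

end ProfileFun

section RetroLabeling

variable {h : Q × ℕ → List Bool} {k : ℕ} {lam : Q × ℕ → Bool}

theorem IsRetroLabeling.acc_eq_false (hlam : A.IsRetroLabeling w h k lam) {v : Q × ℕ}
    (hv : A.InDag w v) (hk : k < v.2) (hlv : lam v = true) : A.acc v.1 = false := by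
  by_contra hacc
  simpa [hlv] using hlam.2.1 v hv hk (by simpa using hacc)

/-- Induction on the level: equal profiles come from `G'`-parents with equal profiles and end in
the same acceptance bit. -/
theorem IsRetroLabeling.eq_of_profile_eq [Finite Q] (hprof : A.IsProfileFun w h)
    (hlam : A.IsRetroLabeling w h k lam) {u u' : Q × ℕ} (hu : A.InDag w u) (hu' : A.InDag w u')
    (hlev : u.2 = u'.2) (hh : h u = h u') : lam u = lam u' := by
  induction hi : u.2 generalizing u u' with
  | zero => rw [hlam.1 u hu (by omega), hlam.1 u' hu' (by omega)]
  | succ i ih =>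
    rcases le_or_gt (i + 1) k with hk | hk
    · rw [hlam.1 u hu (by omega), hlam.1 u' hu' (by omega)]
    obtain ⟨t, ht⟩ := exists_edge' (h := h) hu (by omega)
    obtain ⟨t', ht'⟩ := exists_edge' (h := h) hu' (by omega)
    have hlevt : u.2 = t.2 + 1 := ht.1.2.1
    have hlevt' : u'.2 = t'.2 + 1 := ht'.1.2.1
    have hlen : (h t).length = (h t').length := by
      rw [hprof.length_eq ht.1.1, hprof.length_eq ht'.1.1]
      omega
    obtain ⟨hth, hacc⟩ := List.append_inj
      ((hprof.eq_append_of_edge' ht).symm.trans (hh.trans (hprof.eq_append_of_edge' ht'))) hlen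
    cases hacc' : A.acc u.1
    · have hacc'' : A.acc u'.1 = false := by simpa [hacc'] using hacc.symm
      rw [hlam.2.2 t u (by omega) hacc' ht, hlam.2.2 t' u' (by omega) hacc'' ht']
      exact ih ht.1.1 ht'.1.1 (by omega) hth (by omega)
    · have hacc'' : A.acc u'.1 = true := by simpa [hacc'] using hacc.symm
      rw [hlam.2.1 u hu (by omega) hacc', hlam.2.1 u' hu' (by omega) hacc'']

def topProfiles (A : NBW Q σ) (w : ℕ → σ) (h : Q × ℕ → List Bool) (lam : Q × ℕ → Bool)
    (i : ℕ) : Set (List Bool) :=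
  {p | ∃ v, A.InDag w v ∧ v.2 = i ∧ lam v = true ∧ h v = p}

theorem alphaCount_eq_ncard (u : Q × ℕ) :
    A.alphaCount w h lam u = {p ∈ A.topProfiles w h lam u.2 | h u < p}.ncard := by
  unfold alphaCount topProfiles
  congr 1
  ext p
  constructor
  · rintro ⟨v, hv, hlev, hlv, rfl, hlt⟩
    exact ⟨⟨v, hv, hlev, hlv, rfl⟩, hlt⟩
  · rintro ⟨⟨v, hv, hlev, hlv, rfl⟩, hlt⟩
    exact ⟨v, hv, hlev, hlv, rfl, hlt⟩

theorem topProfiles_finite [Finite Q] (i : ℕ) : (A.topProfiles w h lam i).Finite :=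
  (Set.finite_range fun q : Q => h (q, i)).subset fun _ ⟨v, _, hlev, _, hp⟩ =>
    ⟨v.1, by rw [← hlev, ← hp]⟩

theorem IsRetroLabeling.ncard_topProfiles_le [Fintype Q] (hlam : A.IsRetroLabeling w h k lam)
    {i : ℕ} (hk : k < i) :
    (A.topProfiles w h lam i).ncard ≤ (Finset.univ.filter fun q => A.acc q = false).card := by
  have hsub : A.topProfiles w h lam i ⊆
      (fun q => h (q, i)) '' ↑(Finset.univ.filter fun q => A.acc q = false) := by
    rintro _ ⟨v, hv, rfl, hlv, rfl⟩
    exact ⟨v.1, by simpa using hlam.acc_eq_false hv hk hlv, rfl⟩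
  calc _ ≤ _ := Set.ncard_le_ncard hsub (Set.toFinite _)
    _ ≤ _ := Set.ncard_image_le (Finset.finite_toSet _)
    _ = _ := Set.ncard_coe_finset _

theorem alphaCount_le_ncard_topProfiles [Finite Q] (u : Q × ℕ) :
    A.alphaCount w h lam u ≤ (A.topProfiles w h lam u.2).ncard := by
  rw [alphaCount_eq_ncard]
  exact Set.ncard_le_ncard (Set.sep_subset _ _) (topProfiles_finite _)

theorem alphaCount_lt_ncard_topProfiles [Finite Q] {u : Q × ℕ} (hu : A.InDag w u)
    (hlu : lam u = true) : A.alphaCount w h lam u < (A.topProfiles w h lam u.2).ncard := by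
  rw [alphaCount_eq_ncard]
  exact Set.ncard_lt_ncard ⟨Set.sep_subset _ _,
    fun hsub => lt_irrefl _ (hsub ⟨u, hu, rfl, hlu, rfl⟩).2⟩ (topProfiles_finite _)

theorem alphaCount_le_ncard_of_edge [Finite Q] (hprof : A.IsProfileFun w h)
    (hlam : A.IsRetroLabeling w h k lam) {u v : Q × ℕ} (e : A.Edge w u v) (hk : k < v.2) :
    A.alphaCount w h lam v ≤
      {p ∈ A.topProfiles w h lam u.2 | h u < p ∧ h v < p ++ [false]}.ncard := by
  have hsub : {p ∈ A.topProfiles w h lam v.2 | h v < p} ⊆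
      (· ++ [false]) '' {p ∈ A.topProfiles w h lam u.2 | h u < p ∧ h v < p ++ [false]} := by
    rintro _ ⟨⟨v', hv', hlev, hlv', rfl⟩, hlt⟩
    obtain ⟨t, ht⟩ := exists_edge' (h := h) hv' (by omega)
    have hacc := hlam.acc_eq_false hv' (hlev ▸ hk) hlv'
    have hvt : h v' = h t ++ [false] := hacc ▸ hprof.eq_append_of_edge' ht
    have hlevt : t.2 = u.2 := by have := ht.1.2.1; have := e.2.1; omega
    have hlen : (h u).length = (h t).length := by
      rw [hprof.length_eq e.1, hprof.length_eq ht.1.1, hlevt]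
    have hlt' : h u ++ [A.acc v.1] < h t ++ [false] :=
      (hprof.append_le_of_edge e).trans_lt (hvt ▸ hlt)
    refine ⟨h t, ⟨⟨t, ht.1.1, hlevt, ?_, rfl⟩, ?_, hvt ▸ hlt⟩, hvt.symm⟩
    · rw [← hlam.2.2 t v' (hlev ▸ hk) hacc ht]
      exact hlv'
    · exact ((List.append_singleton_lt_append_singleton_iff hlen).mp hlt').resolve_right
        fun hf => not_lt_bot hf.2
  have hfin := (topProfiles_finite (A := A) (w := w) (h := h) (lam := lam) u.2).subset
    (Set.sep_subset _ fun p => h u < p ∧ h v < p ++ [false])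
  rw [alphaCount_eq_ncard]
  exact (Set.ncard_le_ncard hsub (hfin.image _)).trans (Set.ncard_image_le hfin)

theorem alphaCount_le_of_edge [Finite Q] (hprof : A.IsProfileFun w h)
    (hlam : A.IsRetroLabeling w h k lam) {u v : Q × ℕ} (e : A.Edge w u v) (hk : k < v.2) :
    A.alphaCount w h lam v ≤ A.alphaCount w h lam u := by
  refine (alphaCount_le_ncard_of_edge hprof hlam e hk).trans ?_
  rw [alphaCount_eq_ncard]
  exact Set.ncard_le_ncard (fun p hp => ⟨hp.1, hp.2.1⟩) ((topProfiles_finite _).subset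
    (Set.sep_subset _ _))

/-- When the label drops from `⊥` at `u` to `⊤` at `v`, the class of the `⊤`-labelled
`G'`-parent of `v` lies above `h u` but is not counted by `α(v)`. -/
theorem alphaCount_lt_of_edge [Finite Q] (hprof : A.IsProfileFun w h)
    (hlam : A.IsRetroLabeling w h k lam) {u v : Q × ℕ} (e : A.Edge w u v) (hk : k < v.2)
    (hlv : lam v = true) (hlu : lam u = false) :
    A.alphaCount w h lam v < A.alphaCount w h lam u := by
  have hacc := hlam.acc_eq_false e.inDag_right hk hlv
  obtain ⟨u₀, hu₀⟩ := exists_edge' (h := h) e.inDag_right (by omega)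
  have hvu₀ : h v = h u₀ ++ [false] := hacc ▸ hprof.eq_append_of_edge' hu₀
  have hlu₀ : lam u₀ = true := (hlam.2.2 u₀ v hk hacc hu₀).symm.trans hlv
  have hlev : u₀.2 = u.2 := by have := hu₀.1.2.1; have := e.2.1; omega
  have hlen : (h u).length = (h u₀).length := by
    rw [hprof.length_eq e.1, hprof.length_eq hu₀.1.1, hlev]
  have hle : h u ≤ h u₀ := (List.append_singleton_le_append_singleton_iff hlen false).mp
    (hvu₀ ▸ hacc ▸ hprof.append_le_of_edge e)
  have hne : h u ≠ h u₀ := fun hh => by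
    simpa [hlu, hlu₀] using hlam.eq_of_profile_eq hprof e.1 hu₀.1.1 hlev.symm hh
  refine (alphaCount_le_ncard_of_edge hprof hlam e hk).trans_lt ?_
  rw [alphaCount_eq_ncard]
  exact Set.ncard_lt_ncard ⟨fun p hp => ⟨hp.1, hp.2.1⟩,
    fun hsub => (hsub ⟨⟨u₀, hu₀.1.1, hlev, hlu₀, rfl⟩, lt_of_le_of_ne hle hne⟩).2.2.ne hvu₀⟩
    ((topProfiles_finite _).subset (Set.sep_subset _ _))

theorem retroRank_of_le {m : ℕ} {u : Q × ℕ} (hk : u.2 ≤ k) : A.retroRank w h lam k m u = m :=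
  if_pos hk

theorem retroRank_of_lt {m : ℕ} {u : Q × ℕ} (hk : k < u.2) :
    A.retroRank w h lam k m u = 2 * A.alphaCount w h lam u + (lam u).toNat := by
  rw [retroRank, if_neg hk.not_ge]
  cases lam u <;> rfl

theorem IsRetroLabeling.even_retroRank (hlam : A.IsRetroLabeling w h k lam) {m : ℕ}
    (hm : Even m) {v : Q × ℕ} (hv : A.InDag w v) (hacc : A.acc v.1 = true) :
    Even (A.retroRank w h lam k m v) := by
  rcases le_or_gt v.2 k with hk | hk
  · rwa [retroRank_of_le hk]
  · rw [retroRank_of_lt hk, hlam.2.1 v hv hk hacc]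
    exact even_two_mul _

theorem IsRetroLabeling.retroRank_le_mBound [Fintype Q] (hlam : A.IsRetroLabeling w h k lam)
    {v : Q × ℕ} (hv : A.InDag w v) : A.retroRank w h lam k A.mBound v ≤ A.mBound := by
  rcases le_or_gt v.2 k with hk | hk
  · exact (retroRank_of_le hk).le
  have hT := hlam.ncard_topProfiles_le hk
  rw [retroRank_of_lt hk, mBound]
  cases hlv : lam v
  · have := alphaCount_le_ncard_topProfiles (A := A) (w := w) (h := h) (lam := lam) v
    simp only [Bool.toNat_false]
    omega
  · have := alphaCount_lt_ncard_topProfiles (h := h) hv hlv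
    simp only [Bool.toNat_true]
    omega

theorem IsRetroLabeling.retroRank_le_of_edge [Fintype Q] (hprof : A.IsProfileFun w h)
    (hlam : A.IsRetroLabeling w h k lam) {u v : Q × ℕ} (e : A.Edge w u v) :
    A.retroRank w h lam k A.mBound v ≤ A.retroRank w h lam k A.mBound u := by
  have hlev : v.2 = u.2 + 1 := e.2.1
  rcases le_or_gt v.2 k with hv | hv
  · rw [retroRank_of_le hv, retroRank_of_le (by omega)]
  rcases le_or_gt u.2 k with hu | hu
  · rw [retroRank_of_le hu]
    exact hlam.retroRank_le_mBound e.inDag_right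
  rw [retroRank_of_lt hv, retroRank_of_lt hu]
  have hα := alphaCount_le_of_edge hprof hlam e hv
  cases hlv : lam v <;> cases hlu : lam u
  · simp only [Bool.toNat_false]; omega
  · simp only [Bool.toNat_false, Bool.toNat_true]; omega
  · have := alphaCount_lt_of_edge hprof hlam e hv hlv hlu
    simp only [Bool.toNat_false, Bool.toNat_true]; omega
  · simp only [Bool.toNat_true]; omega

end RetroLabeling

end NBW

/-- `r^k` is a ranking bounded by `m = 2|Q \ F|`: F-nodes get even
ranks, ranks do not increase along edges of `G`, and ranks are at most `m`. -/
theorem stmt15 {Q σ : Type} [Fintype Q] (A : NBW Q σ) (w : ℕ → σ) (h : Q × ℕ → List Bool)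
    (hprof : A.IsProfileFun w h) (k : ℕ) (lam : Q × ℕ → Bool)
    (hlam : A.IsRetroLabeling w h k lam) :
    (∀ v, A.InDag w v → A.acc v.1 = true → Even (A.retroRank w h lam k (A.mBound) v)) ∧
    (∀ u v, A.Edge w u v →
      A.retroRank w h lam k (A.mBound) v ≤ A.retroRank w h lam k (A.mBound) u) ∧
    (∀ v, A.InDag w v → A.retroRank w h lam k (A.mBound) v ≤ A.mBound) :=
  ⟨fun _ hv hacc => hlam.even_retroRank (even_two_mul _) hv hacc,
    fun _ _ e => hlam.retroRank_le_of_edge hprof e,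
    fun _ hv => hlam.retroRank_le_mBound hv⟩
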